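/- Let G be a cyclic group of prime power order p^r with generator x. If p is odd, the elements [x, x^i, x^{p^r−1−i}] for i = 1,…,(p^r−1)/2 form a ℤ-basis of 𝔹_G, i.e., 𝔹_G is a free abelian group freely generated by these elements. If p = 2 (and p^r > 2), the elements [x, x^i, x^{2^r−1−i}] for i = 1,…,2^{r−1}−1 form a ℤ-basis of 𝔹_G. -/

import Mathlib

/-!
Write `n` for the order of `x` and `e_k` for the basis element of the class of `x ^ k`, so that
`N` is spanned by the `e_k + e_(n-k)` and the triples are `w_i = e_1 + e_(i+1) + e_(n-2-i)`.
Modulo `N` and the triples, `e_(k+1) ≡ e_k + e_1` for every `k`: for `k ≤ (n - 1) / 2` this is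
`w_(k-1)`, and inversion reduces the other exponents to these. Hence `e_k ≡ k e_1` and
`n e_1 ≡ 0`, and an element of `ker φ`, being `≡ a e_1` with `x ^ a = 1`, lies in `N` plus the
span of the triples. For independence, `(n - 1) / 2` functionals that are odd under `k ↦ n - k`
factor through `𝔹_G` and take an upper triangular matrix with nonzero diagonal on the triples.
-/

namespace SingOrbit

variable (G : Type*) [Group G]

/-- The map from conjugacy classes to the abelianization. -/
def classAb : ConjClasses G → Additive (Abelianization G) :=
  Quotient.lift (fun g : G => Additive.ofMul (Abelianization.of g)) <| by
    intro a b hab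
    obtain ⟨c, hc⟩ := isConj_iff.mp (hab : IsConj a b)
    subst hc
    show Additive.ofMul (Abelianization.of a) = Additive.ofMul (Abelianization.of (c * a * c⁻¹))
    congr 1
    rw [map_mul, map_mul, map_inv, mul_comm (Abelianization.of c) (Abelianization.of a),
      mul_inv_cancel_right]

/-- Nontrivial conjugacy classes. -/
def NCC := {c : ConjClasses G // c ≠ 1}

/-- The homomorphism `φ` from the free abelian group on the nontrivial conjugacy classes
to the abelianization, sending a conjugacy class to the image of any representative. -/
noncomputable def phi : FreeAbelianGroup (NCC G) →+ Additive (Abelianization G) :=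
  FreeAbelianGroup.lift fun c => classAb G c.1

/-- The basis element of the free abelian group corresponding to a conjugacy class
(`0` for the trivial class). -/
noncomputable def clsC (c : ConjClasses G) : FreeAbelianGroup (NCC G) :=
  letI := Classical.dec (c = 1)
  if h : c = 1 then 0 else FreeAbelianGroup.of ⟨c, h⟩

/-- The basis element corresponding to the conjugacy class of a group element. -/
noncomputable def clsF (x : G) : FreeAbelianGroup (NCC G) := clsC G (ConjClasses.mk x)

/-- The subgroup generated by the elements `x̂ + x̂⁻¹`. -/
noncomputable def NSub : AddSubgroup (FreeAbelianGroup (NCC G)) :=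
  AddSubgroup.closure {a | ∃ x : G, a = clsF G x + clsF G x⁻¹}

/-- The group `𝔹_G` of singular orbit data: `(ker φ) / N`. -/
noncomputable def SOD := (phi G).ker ⧸ ((NSub G).addSubgroupOf (phi G).ker)

noncomputable instance : AddCommGroup (SOD G) :=
  inferInstanceAs (AddCommGroup ((phi G).ker ⧸ ((NSub G).addSubgroupOf (phi G).ker)))

variable {G}

lemma classAb_mk (x : G) :
    classAb G (ConjClasses.mk x) = Additive.ofMul (Abelianization.of x) := rfl

lemma mk_eq_one_iff {x : G} : ConjClasses.mk x = 1 ↔ x = 1 := by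
  rw [ConjClasses.one_eq_mk_one, ConjClasses.mk_eq_mk_iff_isConj, isConj_one_left]

lemma phi_of (c : NCC G) : phi G (FreeAbelianGroup.of c) = classAb G c.1 :=
  FreeAbelianGroup.lift_apply_of _ _

lemma phi_clsF (x : G) : phi G (clsF G x) = Additive.ofMul (Abelianization.of x) := by
  rw [clsF, clsC]
  split_ifs with h
  · have hx : x = 1 := mk_eq_one_iff.mp h
    subst hx
    simp
  · exact phi_of (G := G) ⟨_, h⟩

/-- The element of the free abelian group associated to a list of group elements. -/
noncomputable def sumF (l : List G) : FreeAbelianGroup (NCC G) := (l.map (clsF G)).sum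

lemma sumF_nil : sumF ([] : List G) = 0 := rfl

lemma sumF_cons (a : G) (t : List G) : sumF (a :: t) = clsF G a + sumF t := by
  simp [sumF]

lemma phi_sumF (l : List G) :
    phi G (sumF l) = Additive.ofMul (Abelianization.of l.prod) := by
  induction l with
  | nil => simp [sumF_nil]
  | cons a t ih =>
    rw [sumF_cons, map_add, phi_clsF, ih, List.prod_cons, map_mul, ofMul_mul]

lemma abOf_eq_one_iff {x : G} : Abelianization.of x = 1 ↔ x ∈ commutator G :=
  QuotientGroup.eq_one_iff x

lemma sumF_mem_ker {l : List G} (h : l.prod ∈ commutator G) : sumF l ∈ (phi G).ker := by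
  rw [AddMonoidHom.mem_ker, phi_sumF, abOf_eq_one_iff.mpr h]
  rfl

/-- The singular orbit datum `[x̂₁, …, x̂_q]` associated to a list of group elements whose
product lies in the commutator subgroup. -/
noncomputable def data (l : List G) (h : l.prod ∈ commutator G) : SOD G :=
  (QuotientAddGroup.mk ⟨sumF l, sumF_mem_ker h⟩ : SOD G)

lemma triple_pow_mem {G : Type*} [Group G] {x : G} {n a b : ℕ}
    (hx : x ^ n = 1) (h : 1 + a + b = n) :
    ([x, x ^ a, x ^ b] : List G).prod ∈ commutator G := by
  have hprod : ([x, x ^ a, x ^ b] : List G).prod = 1 := by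
    have h1 : ([x, x ^ a, x ^ b] : List G).prod = x ^ (1 + a + b) := by
      simp [pow_add, mul_assoc]
    rw [h1, h, hx]
  rw [hprod]
  exact Subgroup.one_mem _

section Classes

lemma clsF_one : clsF G (1 : G) = 0 :=
  dif_pos (mk_eq_one_iff.mpr rfl)

lemma clsF_eq_of {g : G} {c : NCC G} (h : ConjClasses.mk g = c.1) :
    clsF G g = FreeAbelianGroup.of c := by
  rw [clsF, clsC, dif_neg (h ▸ c.2)]
  exact congrArg _ (Subtype.ext h)

lemma lift_clsF {A : Type*} [AddCommGroup A] {f : ConjClasses G → A} (hf : f 1 = 0) (g : G) :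
    FreeAbelianGroup.lift (fun c : NCC G => f c.1) (clsF G g) = f (ConjClasses.mk g) := by
  by_cases hg : ConjClasses.mk g = 1
  · rw [clsF, clsC, dif_pos hg, map_zero, hg, hf]
  · rw [clsF_eq_of (c := ⟨_, hg⟩) rfl]
    exact FreeAbelianGroup.lift_apply_of _ _

lemma sumF_triple (a b c : G) : sumF [a, b, c] = clsF G a + clsF G b + clsF G c := by
  simp [sumF, add_assoc]

lemma NSub_le_ker_phi : NSub G ≤ (phi G).ker := by
  rw [NSub, AddSubgroup.closure_le]
  rintro _ ⟨g, rfl⟩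
  rw [SetLike.mem_coe, AddMonoidHom.mem_ker, map_add, phi_clsF, phi_clsF, ← ofMul_mul, ← map_mul,
    mul_inv_cancel, map_one, ofMul_one]

end Classes

section Cyclic

variable {x : G}

lemma eq_of_isConj_of_forall_mem_zpowers (hgen : ∀ g : G, g ∈ Subgroup.zpowers x) {a b : G}
    (h : IsConj a b) : a = b := by
  obtain ⟨c, rfl⟩ := isConj_iff.mp h
  obtain ⟨i, rfl⟩ := Subgroup.mem_zpowers_iff.mp (hgen c)
  obtain ⟨j, rfl⟩ := Subgroup.mem_zpowers_iff.mp (hgen a)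
  rw [zpow_mul_comm, mul_inv_cancel_right]

lemma commutator_eq_bot_of_forall_mem_zpowers (hgen : ∀ g : G, g ∈ Subgroup.zpowers x) :
    commutator G = ⊥ :=
  have : IsCyclic G :=
    isCyclic_iff_exists_zpowers_eq_top.mpr ⟨x, (Subgroup.eq_top_iff' _).mpr hgen⟩
  commutator_eq_bot G

lemma exists_pow_lt_orderOf_eq [Finite G] (hgen : ∀ g : G, g ∈ Subgroup.zpowers x) (g : G) :
    ∃ k < orderOf x, x ^ k = g := by
  obtain ⟨k, rfl⟩ := mem_powers_iff_mem_zpowers.mpr (hgen g)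
  exact ⟨k % orderOf x, Nat.mod_lt _ (orderOf_pos x), pow_mod_orderOf x k⟩

end Cyclic

section Spanning

variable {x : G} {n : ℕ}

noncomputable def triple (x : G) (n : ℕ) (i : Fin ((n - 1) / 2)) : FreeAbelianGroup (NCC G) :=
  sumF [x, x ^ ((i : ℕ) + 1), x ^ (n - 1 - ((i : ℕ) + 1))]

lemma triple_mem_ker (hx : x ^ n = 1) (i : Fin ((n - 1) / 2)) : triple x n i ∈ (phi G).ker :=
  sumF_mem_ker (triple_pow_mem hx (by omega))

noncomputable def nsubSupTriples (x : G) (n : ℕ) : AddSubgroup (FreeAbelianGroup (NCC G)) :=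
  NSub G ⊔ AddSubgroup.closure (Set.range (triple x n))

lemma nsubSupTriples_le_ker (hx : x ^ n = 1) : nsubSupTriples x n ≤ (phi G).ker :=
  sup_le NSub_le_ker_phi <| (AddSubgroup.closure_le _).mpr <| by
    rintro _ ⟨i, rfl⟩
    exact triple_mem_ker hx i

local notation "π" => QuotientAddGroup.mk' (nsubSupTriples x n)

lemma mk_clsF_inv (g : G) : π (clsF G g⁻¹) = -π (clsF G g) := by
  refine eq_neg_of_add_eq_zero_left ?_
  rw [← map_add, QuotientAddGroup.mk'_apply, QuotientAddGroup.eq_zero_iff, add_comm]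
  exact AddSubgroup.mem_sup_left (AddSubgroup.subset_closure ⟨g, rfl⟩)

lemma mk_triple (i : Fin ((n - 1) / 2)) : π (triple x n i) = 0 :=
  (QuotientAddGroup.eq_zero_iff _).mpr
    (AddSubgroup.mem_sup_right (AddSubgroup.subset_closure ⟨i, rfl⟩))

lemma mk_clsF_pow_succ_of_le (hx : x ^ n = 1) {k : ℕ} (hk : k ≤ (n - 1) / 2) :
    π (clsF G (x ^ (k + 1))) = π (clsF G (x ^ k)) + π (clsF G x) := by
  rcases Nat.eq_zero_or_pos k with rfl | hk0
  · simp [clsF_one]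
  have hw := mk_triple (x := x) (n := n) ⟨k - 1, by omega⟩
  have hinv : x ^ (n - 1 - k) = (x ^ (k + 1))⁻¹ := by
    rw [eq_inv_iff_mul_eq_one, ← pow_add, show n - 1 - k + (k + 1) = n by omega, hx]
  rw [triple, sumF_triple, Nat.sub_add_cancel hk0, hinv, map_add, map_add, mk_clsF_inv] at hw
  linear_combination (norm := abel) -hw

/-- Inversion `g ↦ (g * x)⁻¹` exchanges the two sides of the relation at `g` and at
`(g * x)⁻¹`, which reduces it to exponents at most `(n - 1) / 2`. -/
lemma mk_clsF_pow_succ [Finite G] (hx : orderOf x = n) (k : ℕ) :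
    π (clsF G (x ^ (k + 1))) = π (clsF G (x ^ k)) + π (clsF G x) := by
  have hxn : x ^ n = 1 := hx ▸ pow_orderOf_eq_one x
  have hr : k % n < n := Nat.mod_lt _ (hx ▸ orderOf_pos x)
  rw [pow_succ, ← pow_mod_orderOf x k, hx, ← pow_succ]
  rcases le_or_gt (k % n) ((n - 1) / 2) with hle | hgt
  · exact mk_clsF_pow_succ_of_le hxn hle
  · have hs := mk_clsF_pow_succ_of_le hxn (k := n - 1 - k % n) (by omega)
    have h1 : x ^ (n - 1 - k % n + 1) = (x ^ (k % n))⁻¹ := by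
      rw [eq_inv_iff_mul_eq_one, ← pow_add, show n - 1 - k % n + 1 + k % n = n by omega, hxn]
    have h2 : x ^ (n - 1 - k % n) = (x ^ (k % n + 1))⁻¹ := by
      rw [eq_inv_iff_mul_eq_one, ← pow_add, show n - 1 - k % n + (k % n + 1) = n by omega, hxn]
    rw [h1, h2, mk_clsF_inv, mk_clsF_inv] at hs
    linear_combination (norm := abel) hs

lemma mk_clsF_pow [Finite G] (hx : orderOf x = n) (k : ℕ) :
    π (clsF G (x ^ k)) = k • π (clsF G x) := by
  induction k with
  | zero => simp [clsF_one]
  | succ k ih => rw [mk_clsF_pow_succ hx, ih, succ_nsmul]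

lemma exists_mk_eq_zsmul [Finite G] (hgen : ∀ g : G, g ∈ Subgroup.zpowers x)
    (hx : orderOf x = n) (v : FreeAbelianGroup (NCC G)) : ∃ a : ℤ, π v = a • π (clsF G x) := by
  induction v using FreeAbelianGroup.induction_on with
  | zero => exact ⟨0, by simp⟩
  | of c =>
    obtain ⟨g, hg⟩ := c.1.exists_rep
    obtain ⟨k, -, rfl⟩ := exists_pow_lt_orderOf_eq hgen g
    exact ⟨k, by rw [← clsF_eq_of hg, mk_clsF_pow hx, natCast_zsmul]⟩
  | neg c ih =>
    obtain ⟨a, ha⟩ := ih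
    exact ⟨-a, by rw [map_neg, ha, neg_zsmul]⟩
  | add v w ihv ihw =>
    obtain ⟨a, ha⟩ := ihv
    obtain ⟨b, hb⟩ := ihw
    exact ⟨a + b, by rw [map_add, ha, hb, add_zsmul]⟩

lemma ker_phi_le_nsubSupTriples [Finite G] (hgen : ∀ g : G, g ∈ Subgroup.zpowers x)
    (hx : orderOf x = n) : (phi G).ker ≤ nsubSupTriples x n := by
  have hxn : x ^ n = 1 := hx ▸ pow_orderOf_eq_one x
  intro v hv
  obtain ⟨a, ha⟩ := exists_mk_eq_zsmul hgen hx v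
  have hxa : x ^ a = 1 := by
    have hmem : v - a • clsF G x ∈ (phi G).ker := by
      refine nsubSupTriples_le_ker hxn ((QuotientAddGroup.eq_zero_iff _).mp ?_)
      rw [← QuotientAddGroup.mk'_apply, map_sub, map_zsmul, ha, sub_self]
    rw [AddMonoidHom.mem_ker, map_sub, hv, map_zsmul, phi_clsF, zero_sub, neg_eq_zero,
      ← ofMul_zpow, ← map_zpow] at hmem
    have hcomm := abOf_eq_one_iff.mp hmem
    rwa [commutator_eq_bot_of_forall_mem_zpowers hgen, Subgroup.mem_bot] at hcomm
  obtain ⟨b, rfl⟩ : (n : ℤ) ∣ a := hx ▸ orderOf_dvd_iff_zpow_eq_one.mpr hxa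
  rw [← QuotientAddGroup.eq_zero_iff, ← QuotientAddGroup.mk'_apply, ha, mul_comm, mul_smul,
    natCast_zsmul, ← mk_clsF_pow hx, hxn, clsF_one, map_zero, zsmul_zero]

end Spanning

section Coordinates

/-- Values at `x ^ k` of `(n - 1) / 2` functionals that are odd under `k ↦ n - k`, hence vanish
on `N`. Row `0` is `2k - n` corrected at `k = 1` and `k = n - 1`: up to scaling the only odd
function killing all triples but the first. -/
def coord (n k : ℕ) (j : Fin ((n - 1) / 2)) : ℤ :=
  if (j : ℕ) = 0 then
    if k = 0 then 0 else if k = 1 then 2 else if k = n - 1 then -2 else 2 * k - n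
  else
    (if k = (j : ℕ) + 1 then 1 else 0) - (if k = n - ((j : ℕ) + 1) then 1 else 0)

lemma coord_zero (n : ℕ) : coord n 0 = 0 := by
  funext j
  have := j.isLt
  simp only [coord, Pi.zero_apply]
  grind

lemma coord_add_coord_sub {n k : ℕ} (hk : 0 < k) (hkn : k < n) :
    coord n k + coord n (n - k) = 0 := by
  funext j
  have := j.isLt
  simp only [coord, Pi.add_apply, Pi.zero_apply]
  grind

def tripleMatrix (n : ℕ) : Matrix (Fin ((n - 1) / 2)) (Fin ((n - 1) / 2)) ℤ :=
  fun i => coord n 1 + coord n ((i : ℕ) + 1) + coord n (n - 1 - ((i : ℕ) + 1))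

lemma tripleMatrix_isUpperTriangular (n : ℕ) : (tripleMatrix n).IsUpperTriangular := by
  intro i j (hji : j < i)
  have := i.isLt
  simp only [tripleMatrix, coord, Pi.add_apply]
  grind

lemma tripleMatrix_apply_self_ne_zero (n : ℕ) (i : Fin ((n - 1) / 2)) :
    tripleMatrix n i i ≠ 0 := by
  have := i.isLt
  simp only [tripleMatrix, coord, Pi.add_apply]
  grind

lemma det_tripleMatrix_ne_zero (n : ℕ) : (tripleMatrix n).det ≠ 0 := by
  rw [Matrix.det_of_isUpperTriangular (tripleMatrix_isUpperTriangular n)]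
  exact Finset.prod_ne_zero_iff.mpr fun i _ => tripleMatrix_apply_self_ne_zero n i

end Coordinates

section Independence

variable {x : G} {n : ℕ}

noncomputable def conjLog (x : G) (c : ConjClasses G) : ℕ :=
  sInf {k | ConjClasses.mk (x ^ k) = c}

lemma conjLog_mk_pow (hgen : ∀ g : G, g ∈ Subgroup.zpowers x) {k : ℕ} (hk : k < orderOf x) :
    conjLog x (ConjClasses.mk (x ^ k)) = k := by
  have hmem : ConjClasses.mk (x ^ conjLog x (ConjClasses.mk (x ^ k))) = ConjClasses.mk (x ^ k) :=
    Nat.sInf_mem (s := {j | ConjClasses.mk (x ^ j) = ConjClasses.mk (x ^ k)}) ⟨k, rfl⟩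
  have hle : conjLog x (ConjClasses.mk (x ^ k)) ≤ k := Nat.sInf_le rfl
  exact pow_injOn_Iio_orderOf (hle.trans_lt hk) hk
    (eq_of_isConj_of_forall_mem_zpowers hgen (ConjClasses.mk_eq_mk_iff_isConj.mp hmem))

noncomputable def coordHom (x : G) (n : ℕ) :
    FreeAbelianGroup (NCC G) →+ (Fin ((n - 1) / 2) → ℤ) :=
  FreeAbelianGroup.lift fun c => coord n (conjLog x c.1)

lemma coordHom_clsF_pow (hgen : ∀ g : G, g ∈ Subgroup.zpowers x) (hx : orderOf x = n) {k : ℕ}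
    (hk : k < n) : coordHom x n (clsF G (x ^ k)) = coord n k := by
  have hone : coord n (conjLog x 1) = 0 := by
    rw [ConjClasses.one_eq_mk_one, ← pow_zero x, conjLog_mk_pow hgen (by omega), coord_zero]
  rw [coordHom, lift_clsF (f := fun c => coord n (conjLog x c)) hone,
    conjLog_mk_pow hgen (hx ▸ hk)]

lemma NSub_le_ker_coordHom [Finite G] (hgen : ∀ g : G, g ∈ Subgroup.zpowers x)
    (hx : orderOf x = n) : NSub G ≤ (coordHom x n).ker := by
  rw [NSub, AddSubgroup.closure_le]
  rintro _ ⟨g, rfl⟩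
  obtain ⟨k, hk, rfl⟩ := exists_pow_lt_orderOf_eq hgen g
  rw [hx] at hk
  rcases Nat.eq_zero_or_pos k with rfl | hk0
  · simp [clsF_one]
  have hinv : x ^ (n - k) = (x ^ k)⁻¹ := by
    rw [eq_inv_iff_mul_eq_one, ← pow_add, Nat.sub_add_cancel hk.le, ← hx, pow_orderOf_eq_one]
  rw [SetLike.mem_coe, AddMonoidHom.mem_ker, map_add, ← hinv, coordHom_clsF_pow hgen hx hk,
    coordHom_clsF_pow hgen hx (by omega), coord_add_coord_sub hk0 hk]

lemma coordHom_triple (hgen : ∀ g : G, g ∈ Subgroup.zpowers x) (hx : orderOf x = n)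
    (i : Fin ((n - 1) / 2)) : coordHom x n (triple x n i) = tripleMatrix n i := by
  have := i.isLt
  have hone := coordHom_clsF_pow hgen hx (k := 1) (by omega)
  rw [pow_one] at hone
  rw [triple, sumF_triple, map_add, map_add, hone, coordHom_clsF_pow hgen hx (by omega),
    coordHom_clsF_pow hgen hx (by omega)]
  rfl

end Independence

section Basis

variable {x : G}

noncomputable def tripleClass (x : G) (i : Fin ((orderOf x - 1) / 2)) : SOD G :=
  QuotientAddGroup.mk ⟨triple x (orderOf x) i, triple_mem_ker (pow_orderOf_eq_one x) i⟩

lemma linearIndependent_tripleClass [Finite G] (hgen : ∀ g : G, g ∈ Subgroup.zpowers x) :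
    LinearIndependent ℤ (tripleClass x) := by
  let ψ : SOD G →+ (Fin ((orderOf x - 1) / 2) → ℤ) :=
    QuotientAddGroup.lift _ ((coordHom x (orderOf x)).comp (phi G).ker.subtype) fun _ hw =>
      NSub_le_ker_coordHom hgen rfl (AddSubgroup.mem_addSubgroupOf.mp hw)
  have hψ : ψ.toIntLinearMap ∘ tripleClass x = tripleMatrix (orderOf x) :=
    funext (coordHom_triple hgen rfl)
  exact LinearIndependent.of_comp ψ.toIntLinearMap
    (hψ ▸ Matrix.linearIndependent_rows_of_det_ne_zero (det_tripleMatrix_ne_zero _))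

lemma top_le_span_tripleClass [Finite G] (hgen : ∀ g : G, g ∈ Subgroup.zpowers x) :
    ⊤ ≤ Submodule.span ℤ (Set.range (tripleClass x)) := by
  rintro q -
  obtain ⟨⟨v, hv⟩, rfl⟩ := QuotientAddGroup.mk_surjective q
  obtain ⟨a, ha, b, hb, rfl⟩ := AddSubgroup.mem_sup.mp (ker_phi_le_nsubSupTriples hgen rfl hv)
  obtain ⟨c, rfl⟩ := AddSubgroup.mem_closure_range_iff_of_fintype.mp hb
  have hsum : (QuotientAddGroup.mk ⟨a + ∑ i, c i • triple x (orderOf x) i, hv⟩ : SOD G) =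
      ∑ i, c i • tripleClass x i := by
    let w : Fin ((orderOf x - 1) / 2) → (phi G).ker :=
      fun i => ⟨triple x (orderOf x) i, triple_mem_ker (pow_orderOf_eq_one x) i⟩
    have hmk : ∑ i, c i • tripleClass x i = QuotientAddGroup.mk (∑ i, c i • w i) := by
      simp only [QuotientAddGroup.mk_sum, QuotientAddGroup.mk_zsmul]
      rfl
    rw [hmk, QuotientAddGroup.eq_iff_sub_mem, AddSubgroup.mem_addSubgroupOf]
    simpa [w] using ha
  rw [hsum]
  exact Submodule.sum_mem _ fun i _ => Submodule.smul_mem _ _ (Submodule.subset_span ⟨i, rfl⟩)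

theorem exists_basis_triples [Finite G] (hgen : ∀ g : G, g ∈ Subgroup.zpowers x) {n : ℕ}
    (hx : orderOf x = n) :
    ∃ b : Module.Basis (Fin ((n - 1) / 2)) ℤ (SOD G), ∀ (i : Fin ((n - 1) / 2))
      (h : ([x, x ^ ((i : ℕ) + 1), x ^ (n - 1 - ((i : ℕ) + 1))] : List G).prod ∈ commutator G),
      b i = data _ h := by
  subst hx
  exact ⟨.mk (linearIndependent_tripleClass hgen) (top_le_span_tripleClass hgen),
    fun i _ => Module.Basis.mk_apply _ _ i⟩

end Basis

/-- for `G` cyclic of prime power order `p^r` with generator `x`: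
if `p` is odd the triples `[x, x^i, x^(p^r-1-i)]`, `i = 1, …, (p^r-1)/2`, form a
`ℤ`-basis of `𝔹_G`; if `p = 2` (and `p^r > 2`) the triples `[x, x^i, x^(2^r-1-i)]`,
`i = 1, …, 2^(r-1) - 1`, form a `ℤ`-basis of `𝔹_G`. -/
theorem stmt3 (p r : ℕ) (hr : 0 < r)
    (G : Type*) [Group G] [Fintype G] (x : G)
    (hgen : ∀ g : G, g ∈ Subgroup.zpowers x) (hcard : Fintype.card G = p ^ r) :
    (Odd p →
      ∃ b : Module.Basis (Fin ((p ^ r - 1) / 2)) ℤ (SOD G), ∀ i : Fin ((p ^ r - 1) / 2),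
        b i = data [x, x ^ ((i : ℕ) + 1), x ^ (p ^ r - 1 - ((i : ℕ) + 1))]
          (triple_pow_mem (n := p ^ r) (by rw [← hcard]; exact pow_card_eq_one)
            (by have := i.isLt; omega))) ∧
    (∀ (hp2 : p = 2), 2 < 2 ^ r →
      ∃ b : Module.Basis (Fin (2 ^ (r - 1) - 1)) ℤ (SOD G), ∀ i : Fin (2 ^ (r - 1) - 1),
        b i = data [x, x ^ ((i : ℕ) + 1), x ^ (2 ^ r - 1 - ((i : ℕ) + 1))]
          (triple_pow_mem (n := 2 ^ r) (by rw [← hp2, ← hcard]; exact pow_card_eq_one)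
            (by
              have h1 := i.isLt
              have h2 : (2 : ℕ) ^ r = 2 * 2 ^ (r - 1) := by
                conv_lhs => rw [show r = (r - 1) + 1 by omega]
                rw [pow_succ']
              omega))) := by
  have hx : orderOf x = p ^ r :=
    (orderOf_eq_card_of_forall_mem_zpowers hgen).trans (Nat.card_eq_fintype_card.trans hcard)
  obtain ⟨b, hb⟩ := exists_basis_triples hgen hx
  refine ⟨fun _ => ⟨b, fun i => hb i _⟩, fun hp2 _ => ?_⟩
  subst hp2
  have hpow : 2 ^ r = 2 * 2 ^ (r - 1) := by rw [← pow_succ', Nat.sub_add_cancel hr]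
  have hindex : (2 ^ r - 1) / 2 = 2 ^ (r - 1) - 1 := by omega
  exact ⟨b.reindex (finCongr hindex), fun i => (b.reindex_apply _ i).trans (hb _ _)⟩

end SingOrbit
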